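/- Let ℓ be a prime, r ≥ 1, Π a closed subgroup of GL_r(ℤ_ℓ), and C ⊆ Π a closed subgroup which is not open in Π. For each n ≥ 1, let Π_n and C_n denote the images of Π and C under the reduction map GL_r(ℤ_ℓ) → GL_r(ℤ/ℓⁿ). Then the index [Π_n : C_n] tends to +∞ as n → +∞. -/

import Mathlib

open Matrix

/-- Reduction modulo `ℓ ^ n` on `GL_r(ℤ_ℓ)`. -/
noncomputable def glRed (l : ℕ) [Fact (Nat.Prime l)] (r n : ℕ) :
    GL (Fin r) ℤ_[l] →* GL (Fin r) (ZMod (l ^ n)) :=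
  Matrix.GeneralLinearGroup.map (PadicInt.toZModPow n)

/-- `Π(n)`: the kernel of reduction modulo `ℓ ^ n` restricted to the closed subgroup `Π`,
viewed as a subgroup of `Π`. -/
noncomputable def levelSubgroup (l : ℕ) [Fact (Nat.Prime l)] (r : ℕ)
    (P : Subgroup (GL (Fin r) ℤ_[l])) (n : ℕ) : Subgroup ↥P :=
  ((glRed l r n).comp P.subtype).ker

/-!
Let `K n ≤ Π` be the kernel of reduction modulo `ℓ ^ n`. Then `[Π_n : C_n] = [Π : C ⊔ K n]`, and
the `K n` are a decreasing chain of normal subgroups of finite index forming a basis of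
neighbourhoods of `1`. If the indices stayed bounded, the chain `C ⊔ K n` would stabilise; its
limit `⋂ n, C ⊔ K n` is the closure of `C`, which is `C` itself, so `C` would be a closed subgroup
of finite index, hence open.
-/

open Filter Topology

namespace Subgroup

variable {G : Type*} [Group G]

theorem index_map_subgroupOf_map {G' : Type*} [Group G'] (f : G →* G') {P : Subgroup G}
    (C : Subgroup P) :
    (((C.map P.subtype).map f).subgroupOf (P.map f)).index =
      (C ⊔ (f.comp P.subtype).ker).index := by
  have hrange : P.map f = (f.comp P.subtype).range := by
    rw [MonoidHom.range_comp, range_subtype]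
  rw [map_map, hrange, ← relIndex, ← index_comap, comap_map_eq]

theorem finiteIndex_iInf_of_bddAbove_index {H : ℕ → Subgroup G} (hH : Antitone H)
    [∀ n, (H n).FiniteIndex] (hbdd : BddAbove (Set.range fun n => (H n).index)) :
    (⨅ n, H n).FiniteIndex := by
  obtain ⟨N, hN⟩ := Nat.sSup_mem (Set.range_nonempty _) hbdd
  have hmax : ∀ n, (H n).index ≤ (H N).index := fun n =>
    (le_csSup hbdd ⟨n, rfl⟩).trans_eq hN.symm
  have hle : H N ≤ ⨅ n, H n := by
    refine le_iInf fun n => ?_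
    rcases le_total n N with h | h
    · exact hH h
    · rcases (hH h).eq_or_lt with heq | hlt
      · exact heq.ge
      · exact absurd (index_strictAnti hlt) (hmax n).not_gt
  exact finiteIndex_of_le hle

variable [TopologicalSpace G] [IsTopologicalGroup G]

theorem iInf_sup_le_of_isClosed {C : Subgroup G} (hC : IsClosed (C : Set G))
    {K : ℕ → Subgroup G} [∀ n, (K n).Normal]
    (hbasis : ∀ V ∈ 𝓝 (1 : G), ∃ n, (K n : Set G) ⊆ V) :
    ⨅ n, C ⊔ K n ≤ C := by
  intro x hx
  rw [← SetLike.mem_coe, ← hC.closure_eq, mem_closure_iff_nhds_one]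
  intro U hU
  obtain ⟨n, hn⟩ := hbasis U hU
  obtain ⟨k, hk, c, hc, rfl⟩ := mem_sup_of_normal_left.mp (sup_comm C (K n) ▸ mem_iInf.mp hx n)
  exact ⟨c, hc, hn (by simpa using (K n).inv_mem hk)⟩

theorem tendsto_index_sup_atTop {C : Subgroup G} (hC : IsClosed (C : Set G))
    (hCopen : ¬ IsOpen (C : Set G)) {K : ℕ → Subgroup G} (hK : Antitone K)
    [∀ n, (K n).Normal] [∀ n, (K n).FiniteIndex]
    (hbasis : ∀ V ∈ 𝓝 (1 : G), ∃ n, (K n : Set G) ⊆ V) :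
    Tendsto (fun n => (C ⊔ K n).index) atTop atTop := by
  have : ∀ n, (C ⊔ K n).FiniteIndex := fun n => finiteIndex_of_le le_sup_right
  have hanti : Antitone fun n => C ⊔ K n := fun m n h => sup_le_sup_left (hK h) C
  refine tendsto_atTop_atTop_of_monotone' (fun m n h => index_antitone (hanti h)) fun hbdd => ?_
  have := finiteIndex_iInf_of_bddAbove_index hanti hbdd
  have : C.FiniteIndex := finiteIndex_of_le (iInf_sup_le_of_isClosed hC hbasis)
  exact hCopen (C.isOpen_of_isClosed_of_finiteIndex hC)

end Subgroup

namespace PadicInt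

variable {p : ℕ} [Fact p.Prime]

theorem norm_sub_le_of_toZModPow_eq {n : ℕ} {x y : ℤ_[p]} (h : toZModPow n x = toZModPow n y) :
    ‖x - y‖ ≤ (p : ℝ) ^ (-(n : ℤ)) := by
  rwa [norm_le_pow_iff_mem_span_pow, ← ker_toZModPow, RingHom.mem_ker, map_sub, sub_eq_zero]

theorem exists_map_toZModPow_eq_subset_of_mem_nhds {m n : Type*} [Fintype m] [Fintype n]
    {A : Matrix m n ℤ_[p]} {W : Set (Matrix m n ℤ_[p])} (hW : W ∈ 𝓝 A) :
    ∃ k, {B | B.map (toZModPow k) = A.map (toZModPow k)} ⊆ W := by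
  have hW' : W ∈ @nhds (m → n → ℤ_[p]) _ A := hW
  obtain ⟨ε, hε, hball⟩ := Metric.mem_nhds_iff.mp hW'
  obtain ⟨k, hk⟩ := exists_pow_neg_lt p hε
  refine ⟨k, fun B hB => hball (lt_of_le_of_lt ?_ hk)⟩
  refine (dist_pi_le_iff (by positivity)).2 fun i => (dist_pi_le_iff (by positivity)).2 fun j => ?_
  rw [dist_eq_norm]
  exact norm_sub_le_of_toZModPow_eq (congrFun (congrFun hB i) j)

end PadicInt

open PadicInt

section Level

variable (l : ℕ) [Fact (Nat.Prime l)] (r : ℕ)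

theorem antitone_ker_glRed : Antitone fun n => (glRed l r n).ker := by
  intro m n h x hx
  have hcomp : glRed l r m =
      (GeneralLinearGroup.map (ZMod.castHom (pow_dvd_pow l h) (ZMod (l ^ m)))).comp
        (glRed l r n) := by
    rw [glRed, glRed, ← GeneralLinearGroup.map_comp, zmod_cast_comp_toZModPow m n h]
  rw [MonoidHom.mem_ker, hcomp, MonoidHom.comp_apply, hx, map_one]

theorem exists_ker_glRed_subset_of_mem_nhds_one {V : Set (GL (Fin r) ℤ_[l])} (hV : V ∈ 𝓝 1) :
    ∃ n, ((glRed l r n).ker : Set (GL (Fin r) ℤ_[l])) ⊆ V := by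
  -- The topology of `GL` is induced by `x ↦ (x, op x⁻¹)`: both `x` and `x⁻¹` must be near `1`.
  rw [Units.isInducing_embedProduct.nhds_eq_comap, mem_comap] at hV
  obtain ⟨W, hW, hWV⟩ := hV
  obtain ⟨u, hu, v, hv, huv⟩ := mem_nhds_prod_iff.mp hW
  have hv' : MulOpposite.op ⁻¹' v ∈ 𝓝 (1 : Matrix (Fin r) (Fin r) ℤ_[l]) :=
    MulOpposite.continuous_op.continuousAt.preimage_mem_nhds hv
  obtain ⟨n, hn⟩ := exists_map_toZModPow_eq_subset_of_mem_nhds (inter_mem hu hv')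
  have hker : ∀ y ∈ (glRed l r n).ker,
      y.val.map (toZModPow n) = (1 : GL (Fin r) ℤ_[l]).val.map (toZModPow n) := by
    intro y hy
    simpa [glRed, Units.ext_iff] using hy
  exact ⟨n, fun x hx => hWV (huv ⟨(hn (hker x hx)).1, (hn (hker x⁻¹ (inv_mem hx))).2⟩)⟩

variable (P : Subgroup (GL (Fin r) ℤ_[l]))

theorem antitone_levelSubgroup : Antitone (levelSubgroup l r P) :=
  fun _ _ h _ hx => antitone_ker_glRed l r h hx

instance (n : ℕ) : (levelSubgroup l r P n).Normal := MonoidHom.normal_ker _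

instance (n : ℕ) : (levelSubgroup l r P n).FiniteIndex := by
  have : NeZero (l ^ n) := ⟨pow_ne_zero n (Fact.out : l.Prime).ne_zero⟩
  exact Subgroup.finiteIndex_ker _

theorem exists_levelSubgroup_subset_of_mem_nhds_one {V : Set P} (hV : V ∈ 𝓝 1) :
    ∃ n, (levelSubgroup l r P n : Set P) ⊆ V := by
  rw [nhds_induced, mem_comap] at hV
  obtain ⟨W, hW, hWV⟩ := hV
  obtain ⟨n, hn⟩ := exists_ker_glRed_subset_of_mem_nhds_one l r hW
  exact ⟨n, fun x hx => hWV (hn hx)⟩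

end Level

open Filter in
theorem index_image_tendsto_atTop_general (l : ℕ) [Fact (Nat.Prime l)] (r : ℕ)
    (P : Subgroup (GL (Fin r) ℤ_[l]))
    (C : Subgroup ↥P) (hCclosed : IsClosed (C : Set ↥P)) (hCopen : ¬ IsOpen (C : Set ↥P)) :
    Tendsto
      (fun n : ℕ =>
        (((C.map P.subtype).map (glRed l r n)).subgroupOf (P.map (glRed l r n))).index)
      atTop atTop := by
  simp_rw [Subgroup.index_map_subgroupOf_map]
  exact Subgroup.tendsto_index_sup_atTop hCclosed hCopen (antitone_levelSubgroup l r P)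
    fun _ => exists_levelSubgroup_subset_of_mem_nhds_one l r P

open Filter in
/-- If C is a closed but not open subgroup of the closed subgroup Pi of GL_r(Z_l), and
Pi_n, C_n denote the images of Pi and C under reduction modulo l^n, then the index
[Pi_n : C_n] tends to infinity with n. -/
theorem index_image_tendsto_atTop (l : ℕ) [Fact (Nat.Prime l)] (r : ℕ)
    (P : Subgroup (GL (Fin r) ℤ_[l])) (hP : IsClosed (P : Set (GL (Fin r) ℤ_[l])))
    (C : Subgroup ↥P) (hCclosed : IsClosed (C : Set ↥P)) (hCopen : ¬ IsOpen (C : Set ↥P)) :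
    Tendsto
      (fun n : ℕ =>
        (((C.map P.subtype).map (glRed l r n)).subgroupOf (P.map (glRed l r n))).index)
      atTop atTop :=
  index_image_tendsto_atTop_general l r P C hCclosed hCopen
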